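/- Let k ≥ 1, p > 1 and M > 0. There exists a constant c = c(k,p,M) > 0 such that for all z, η ∈ ℝ^k with |η| ≤ M the following hold: if |z − η| > 1 then |z − η|^{p} ≤ c |V_p(z) − V_p(η)|², and if |z − η| ≤ 1 then |z − η|² ≤ c |V_p(z) − V_p(η)|². -/

import Mathlib

noncomputable def Vp (p : ℝ) {E : Type*} [NormedAddCommGroup E] [NormedSpace ℝ E] (z : E) : E :=
  ((1 + ‖z‖ ^ 2) ^ ((p - 2) / 4)) • z

/-!
On a ball of radius `R` the map `V_p` is strongly monotone: along the segment from `η` to `z`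
the derivative of `t ↦ ⟪V_p (η + t (z - η)), z - η⟫` is at least `c_R ‖z - η‖²`, hence
`c_R ‖z - η‖ ≤ ‖V_p z - V_p η‖`, which handles all `z` in a large ball `‖z‖ ≤ T`.
Outside it, `‖V_p z‖² ≥ ‖z‖^p / 2` dominates the bounded `‖V_p η‖`, so `‖V_p z - V_p η‖²`
is at least `1` and comparable to `‖z‖^p ≥ 2^{-p} ‖z - η‖^p`.
-/

open Filter Real
open scoped RealInnerProductSpace

/-- Lower bound for `⟪DV_p(y) h, h⟫ / ‖h‖²` over `‖y‖ ≤ R`. -/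
noncomputable def vpCoercivityConst (p R : ℝ) : ℝ :=
  min 1 (p / 2) * min 1 ((1 + R ^ 2) ^ ((p - 2) / 4))

lemma vpCoercivityConst_pos {p : ℝ} (hp : 0 < p) (R : ℝ) : 0 < vpCoercivityConst p R := by
  unfold vpCoercivityConst
  positivity

lemma min_one_rpow_le_rpow_of_le_sq {N R a : ℝ} (hN : 0 ≤ N) (hNR : N ≤ R ^ 2) :
    min 1 ((1 + R ^ 2) ^ a) ≤ (1 + N) ^ a := by
  rcases le_or_gt 0 a with ha | ha
  · exact (min_le_left _ _).trans (one_le_rpow (by linarith) ha)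
  · exact (min_le_right _ _).trans (rpow_le_rpow_of_nonpos (by linarith) (by linarith) ha.le)

lemma min_one_div_two_mul_le {p N m d : ℝ} (hd : 0 ≤ d) (hm : m ^ 2 ≤ N * d) :
    min 1 (p / 2) * ((1 + N) * d) ≤ (p / 2 - 1) * m ^ 2 + (1 + N) * d := by
  rcases le_total 2 p with h2 | h2
  · nlinarith [min_le_left 1 (p / 2), sq_nonneg m]
  · nlinarith [min_le_right 1 (p / 2)]

/-- The right-hand side is `⟪DV_p(y) h, h⟫` with `N = ‖y‖²`, `m = ⟪y, h⟫`, `d = ‖h‖²`. -/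
lemma vpCoercivityConst_mul_le {p R N m d : ℝ} (hp : 0 ≤ p) (hN : 0 ≤ N) (hNR : N ≤ R ^ 2)
    (hd : 0 ≤ d) (hm : m ^ 2 ≤ N * d) :
    vpCoercivityConst p R * d ≤
      (1 + N) ^ ((p - 2) / 4 - 1) * ((p / 2 - 1) * m ^ 2 + (1 + N) * d) := by
  have hN1 : 0 < 1 + N := by linarith
  have hmin : 0 ≤ min 1 (p / 2) := le_min zero_le_one (by linarith)
  have hpow := min_one_rpow_le_rpow_of_le_sq (a := (p - 2) / 4) hN hNR
  calc vpCoercivityConst p R * d ≤ min 1 (p / 2) * (1 + N) ^ ((p - 2) / 4) * d := by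
        unfold vpCoercivityConst
        gcongr
    _ = (1 + N) ^ ((p - 2) / 4 - 1) * (min 1 (p / 2) * ((1 + N) * d)) := by
        rw [rpow_sub_one hN1.ne']
        field_simp
    _ ≤ (1 + N) ^ ((p - 2) / 4 - 1) * ((p / 2 - 1) * m ^ 2 + (1 + N) * d) := by
        gcongr
        exact min_one_div_two_mul_le hd hm

section NormedSpace

variable {E : Type*} [NormedAddCommGroup E] [NormedSpace ℝ E]

lemma norm_Vp (p : ℝ) (x : E) : ‖Vp p x‖ = (1 + ‖x‖ ^ 2) ^ ((p - 2) / 4) * ‖x‖ := by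
  rw [Vp, norm_smul, norm_of_nonneg (by positivity)]

lemma norm_Vp_le {M : ℝ} (p : ℝ) {x : E} (hx : ‖x‖ ≤ M) :
    ‖Vp p x‖ ≤ (1 + M ^ 2) ^ |(p - 2) / 4| * M := by
  have h1 : 1 ≤ 1 + ‖x‖ ^ 2 := by nlinarith [norm_nonneg x]
  have hsq : ‖x‖ ^ 2 ≤ M ^ 2 := pow_le_pow_left₀ (norm_nonneg x) hx 2
  rw [norm_Vp]
  gcongr
  calc (1 + ‖x‖ ^ 2) ^ ((p - 2) / 4) ≤ (1 + ‖x‖ ^ 2) ^ |(p - 2) / 4| :=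
        rpow_le_rpow_of_exponent_le h1 (le_abs_self _)
    _ ≤ (1 + M ^ 2) ^ |(p - 2) / 4| := by gcongr

lemma rpow_le_two_mul_norm_Vp_sq {p : ℝ} (hp : 0 ≤ p) {x : E} (hx : 1 ≤ ‖x‖) :
    ‖x‖ ^ p ≤ 2 * ‖Vp p x‖ ^ 2 := by
  set s := ‖x‖
  have hs : 0 < s := by linarith
  have h1 : 0 < 1 + s ^ 2 := by positivity
  have hV : ‖Vp p x‖ ^ 2 = (1 + s ^ 2) ^ (p / 2) * (s ^ 2 / (1 + s ^ 2)) := by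
    rw [norm_Vp, mul_pow, ← rpow_mul_natCast h1.le,
      show (p - 2) / 4 * ((2 : ℕ) : ℝ) = p / 2 - 1 by push_cast; ring, rpow_sub_one h1.ne']
    ring
  have hsp : s ^ p = (s ^ 2) ^ (p / 2) := by
    rw [← rpow_natCast_mul hs.le]
    congr 1
    push_cast
    ring
  have hmono : (s ^ 2) ^ (p / 2) ≤ (1 + s ^ 2) ^ (p / 2) := by gcongr; linarith
  have hfrac : 1 / 2 ≤ s ^ 2 / (1 + s ^ 2) := by
    rw [div_le_div_iff₀ (by norm_num) h1]
    nlinarith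
  rw [hV, hsp]
  nlinarith [rpow_nonneg (sq_nonneg s) (p / 2)]

lemma norm_Vp_sub_bounds_of_large {p K : ℝ} (hp : 0 ≤ p) {z w : E} (hz : 1 ≤ ‖z‖)
    (hw : ‖w‖ ≤ K) (hzK : 8 * (K + 1) ^ 2 ≤ ‖z‖ ^ p) :
    1 ≤ ‖Vp p z - w‖ ∧ ‖z‖ ^ p ≤ 8 * ‖Vp p z - w‖ ^ 2 := by
  have hVz := rpow_le_two_mul_norm_Vp_sq hp hz
  have hK : 0 ≤ K := (norm_nonneg w).trans hw
  have hlarge : 2 * (K + 1) ≤ ‖Vp p z‖ := by nlinarith [norm_nonneg (Vp p z)]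
  have hsub : ‖Vp p z‖ - ‖w‖ ≤ ‖Vp p z - w‖ := norm_sub_norm_le _ _
  constructor <;> nlinarith [norm_nonneg (Vp p z)]

end NormedSpace

section InnerProductSpace

variable {E : Type*} [NormedAddCommGroup E] [InnerProductSpace ℝ E]

lemma hasDerivAt_inner_Vp_add_smul (p : ℝ) (x h : E) (t : ℝ) :
    HasDerivAt (fun s : ℝ => ⟪Vp p (x + s • h), h⟫)
      ((1 + ‖x + t • h‖ ^ 2) ^ ((p - 2) / 4 - 1) *
        ((p / 2 - 1) * ⟪x + t • h, h⟫ ^ 2 + (1 + ‖x + t • h‖ ^ 2) * ‖h‖ ^ 2)) t := by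
  have hpos : 0 < 1 + ‖x + t • h‖ ^ 2 := by positivity
  have hline : HasDerivAt (fun s : ℝ => x + s • h) h t := by
    simpa using ((hasDerivAt_id t).smul_const h).const_add x
  have hfactor := (hline.norm_sq.const_add 1).rpow_const (p := (p - 2) / 4) (Or.inl hpos.ne')
  have hinner := hline.inner ℝ (hasDerivAt_const t h)
  simp only [Vp, real_inner_smul_left]
  refine (hfactor.mul hinner).congr_deriv ?_
  rw [inner_zero_right, zero_add, real_inner_self_eq_norm_sq, rpow_sub_one hpos.ne']
  field_simp
  ring

lemma vpCoercivityConst_mul_norm_sub_sq_le_inner {p R : ℝ} (hp : 0 ≤ p) {z η : E}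
    (hz : ‖z‖ ≤ R) (hη : ‖η‖ ≤ R) :
    vpCoercivityConst p R * ‖z - η‖ ^ 2 ≤ ⟪Vp p z - Vp p η, z - η⟫ := by
  set φ : ℝ → ℝ := fun s => ⟪Vp p (η + s • (z - η)), z - η⟫
  have hφ := hasDerivAt_inner_Vp_add_smul p η (z - η)
  have hsegment : ∀ t ∈ Set.Icc (0 : ℝ) 1, ‖η + t • (z - η)‖ ≤ R := fun t ht => by
    simpa using (convex_closedBall (0 : E) R).add_smul_sub_mem (by simpa using hη)
      (by simpa using hz) ht
  have hφ' : ∀ t ∈ interior (Set.Icc (0 : ℝ) 1),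
      vpCoercivityConst p R * ‖z - η‖ ^ 2 ≤ deriv φ t := fun t ht => by
    rw [(hφ t).deriv]
    rw [interior_Icc] at ht
    refine vpCoercivityConst_mul_le hp (sq_nonneg _) ?_ (sq_nonneg _) ?_
    · exact pow_le_pow_left₀ (norm_nonneg _) (hsegment t (Set.Ioo_subset_Icc_self ht)) 2
    · rw [← mul_pow, ← sq_abs]
      exact pow_le_pow_left₀ (abs_nonneg _) (abs_real_inner_le_norm _ _) 2
  have hmono := (convex_Icc (0 : ℝ) 1).mul_sub_le_image_sub_of_le_deriv
    (fun t _ => (hφ t).continuousAt.continuousWithinAt)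
    (fun t _ => (hφ t).differentiableAt.differentiableWithinAt) hφ'
    0 (by simp) 1 (by simp) zero_le_one
  simpa [φ, inner_sub_left] using hmono

lemma vpCoercivityConst_mul_norm_sub_le {p R : ℝ} (hp : 0 < p) {z η : E} (hz : ‖z‖ ≤ R)
    (hη : ‖η‖ ≤ R) : vpCoercivityConst p R * ‖z - η‖ ≤ ‖Vp p z - Vp p η‖ := by
  rcases (norm_nonneg (z - η)).eq_or_lt with hD | hD
  · simp [← hD]
  refine le_of_mul_le_mul_right ?_ hD
  calc vpCoercivityConst p R * ‖z - η‖ * ‖z - η‖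
      = vpCoercivityConst p R * ‖z - η‖ ^ 2 := by ring
    _ ≤ ⟪Vp p z - Vp p η, z - η⟫ := vpCoercivityConst_mul_norm_sub_sq_le_inner hp.le hz hη
    _ ≤ ‖Vp p z - Vp p η‖ * ‖z - η‖ := real_inner_le_norm _ _

end InnerProductSpace

def IsSplitBound (p c D S : ℝ) : Prop :=
  (1 < D → D ^ p ≤ c * S ^ 2) ∧ (D ≤ 1 → D ^ 2 ≤ c * S ^ 2)

lemma IsSplitBound.mono {p c c' D S : ℝ} (h : IsSplitBound p c D S) (hc : c ≤ c') :
    IsSplitBound p c' D S := by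
  have : c * S ^ 2 ≤ c' * S ^ 2 := by gcongr
  exact ⟨fun hD => (h.1 hD).trans this, fun hD => (h.2 hD).trans this⟩

lemma isSplitBound_of_le_mul {p L c D S : ℝ} (hp : 0 ≤ p) (hD : 0 ≤ D) (hDL : D ≤ L)
    (hc : 0 < c) (hDS : c * D ≤ S) : IsSplitBound p ((L ^ p + 1) / c ^ 2) D S := by
  have hLp : 0 ≤ L ^ p := rpow_nonneg (hD.trans hDL) p
  have hD2 : D ^ 2 ≤ S ^ 2 / c ^ 2 := by
    rw [le_div_iff₀ (by positivity), ← mul_pow, mul_comm]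
    exact pow_le_pow_left₀ (by positivity) hDS 2
  constructor
  · intro hD1
    calc D ^ p ≤ L ^ p * D ^ 2 := by
          have : 1 ≤ D ^ 2 := one_le_pow₀ hD1.le
          nlinarith [rpow_le_rpow hD hDL hp]
      _ ≤ L ^ p * (S ^ 2 / c ^ 2) := by gcongr
      _ ≤ (L ^ p + 1) / c ^ 2 * S ^ 2 := by
          rw [div_mul_eq_mul_div, mul_div_assoc]
          gcongr
          linarith
  · intro _
    calc D ^ 2 ≤ S ^ 2 / c ^ 2 := hD2
      _ ≤ (L ^ p + 1) / c ^ 2 * S ^ 2 := by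
          rw [div_mul_eq_mul_div, div_le_div_iff_of_pos_right (by positivity)]
          nlinarith [sq_nonneg S]

lemma isSplitBound_of_one_le {p X D S : ℝ} (hp : 0 ≤ p) (hD : 0 ≤ D) (hDX : D ≤ 2 * X)
    (hX : X ^ p ≤ 8 * S ^ 2) (hS : 1 ≤ S) : IsSplitBound p (8 * 2 ^ p + 1) D S := by
  have h2p : 0 ≤ (2 : ℝ) ^ p := by positivity
  constructor
  · intro _
    calc D ^ p ≤ (2 * X) ^ p := rpow_le_rpow hD hDX hp
      _ = 2 ^ p * X ^ p := mul_rpow zero_le_two (by linarith)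
      _ ≤ 2 ^ p * (8 * S ^ 2) := by gcongr
      _ ≤ (8 * 2 ^ p + 1) * S ^ 2 := by nlinarith [sq_nonneg S]
  · intro hD1
    calc D ^ 2 ≤ 1 := pow_le_one₀ hD hD1
      _ ≤ S ^ 2 := one_le_pow₀ hS
      _ ≤ (8 * 2 ^ p + 1) * S ^ 2 := by nlinarith [sq_nonneg S]

theorem stmt_10_general (k : ℕ) (p : ℝ) (hp : 1 < p) (M : ℝ) :
    ∃ c : ℝ, 0 < c ∧ ∀ z η : EuclideanSpace ℝ (Fin k), ‖η‖ ≤ M →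
      (1 < ‖z - η‖ → ‖z - η‖ ^ p ≤ c * ‖Vp p z - Vp p η‖ ^ 2) ∧
      (‖z - η‖ ≤ 1 → ‖z - η‖ ^ 2 ≤ c * ‖Vp p z - Vp p η‖ ^ 2) := by
  have hp0 : 0 < p := by linarith
  set K := (1 + M ^ 2) ^ |(p - 2) / 4| * M
  obtain ⟨T, hT⟩ := eventually_atTop.1 <|
    ((tendsto_rpow_atTop hp0).eventually_ge_atTop (8 * (K + 1) ^ 2)).and
      (eventually_ge_atTop (max 1 M))
  have hT1 : 1 ≤ T := (le_max_left 1 M).trans (hT T le_rfl).2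
  have hMT : M ≤ T := (le_max_right 1 M).trans (hT T le_rfl).2
  have hc := vpCoercivityConst_pos hp0 T
  refine ⟨max (((2 * T) ^ p + 1) / vpCoercivityConst p T ^ 2) (8 * 2 ^ p + 1), by positivity,
    fun z η hη => ?_⟩
  have hD : ‖z - η‖ ≤ ‖z‖ + M := (norm_sub_le z η).trans (by linarith)
  rcases le_or_gt ‖z‖ T with hzT | hzT
  · exact (isSplitBound_of_le_mul hp0.le (norm_nonneg _) (by linarith) hc
      (vpCoercivityConst_mul_norm_sub_le hp0 hzT (hη.trans hMT))).mono (le_max_left _ _)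
  · obtain ⟨hS, hzS⟩ := norm_Vp_sub_bounds_of_large hp0.le (by linarith) (norm_Vp_le p hη)
      (hT ‖z‖ hzT.le).1
    exact (isSplitBound_of_one_le hp0.le (norm_nonneg _) (by linarith) hzS hS).mono
      (le_max_right _ _)

theorem stmt_10 (k : ℕ) (hk : 1 ≤ k) (p : ℝ) (hp : 1 < p) (M : ℝ) (hM : 0 < M) :
    ∃ c : ℝ, 0 < c ∧ ∀ z η : EuclideanSpace ℝ (Fin k), ‖η‖ ≤ M →
      (1 < ‖z - η‖ → ‖z - η‖ ^ p ≤ c * ‖Vp p z - Vp p η‖ ^ 2) ∧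
      (‖z - η‖ ≤ 1 → ‖z - η‖ ^ 2 ≤ c * ‖Vp p z - Vp p η‖ ^ 2) :=
  stmt_10_general k p hp M
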